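/- arXiv:0804.3500 — 2 statements merged into one kernel-verified Lean document; each statement's English description precedes it below -/
import Mathlib

section
/- Let (M, φ) be a size pair with reduced size function ℓ*. For all real numbers x₁ ≤ x₂ < y₁ ≤ y₂, the quantity ℓ*(x₂,y₁) − ℓ*(x₁,y₁) − ℓ*(x₂,y₂) + ℓ*(x₁,y₂) is non-negative. In particular, the multiplicity μ(p) of every point p ∈ Δ⁺ is non-negative. -/
open Set Topology
open scoped ENNReal

noncomputable def rsf {M : Type*} [TopologicalSpace M] (φ : M → ℝ) (x y : ℝ) : ℕ :=
  Set.ncard {C : Set M | ∃ P, φ P ≤ x ∧ C = connectedComponentIn {Q | φ Q ≤ y} P}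

noncomputable def mult {M : Type*} [TopologicalSpace M] (φ : M → ℝ) (p : ℝ × ℝ) : ℤ :=
  sInf {z : ℤ | ∃ ε : ℝ, 0 < ε ∧ p.1 + ε < p.2 - ε ∧
    z = (rsf φ (p.1 + ε) (p.2 - ε) : ℤ) - (rsf φ (p.1 - ε) (p.2 - ε) : ℤ)
      - (rsf φ (p.1 + ε) (p.2 + ε) : ℤ) + (rsf φ (p.1 - ε) (p.2 + ε) : ℤ)}

noncomputable def multInf {M : Type*} [TopologicalSpace M] (φ : M → ℝ) (k : ℝ) : ℤ :=
  sInf {z : ℤ | ∃ ε : ℝ, 0 < ε ∧ k + ε < 1 / ε ∧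
    z = (rsf φ (k + ε) (1 / ε) : ℤ) - (rsf φ (k - ε) (1 / ε) : ℤ)}

open scoped Classical in
noncomputable def eDist (p q : ℝ × EReal) : ℝ≥0∞ :=
  if p.2 = ⊤ ∧ q.2 = ⊤ then ENNReal.ofReal |p.1 - q.1|
  else if p.2 = ⊤ ∨ q.2 = ⊤ then ⊤
  else ENNReal.ofReal (min (max |p.1 - q.1| |p.2.toReal - q.2.toReal|)
    (max ((p.2.toReal - p.1) / 2) ((q.2.toReal - q.1) / 2)))

def IsRepSeq {M : Type*} [TopologicalSpace M] (φ : M → ℝ) (a : ℕ → ℝ × EReal) : Prop :=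
  (∃ k : ℝ, a 0 = (k, ⊤) ∧ 0 < multInf φ k) ∧
  (∀ i : ℕ, 0 < i →
    (∃ x y : ℝ, a i = (x, (y : EReal)) ∧ x < y ∧ 0 < mult φ (x, y)) ∨
    (∃ x : ℝ, a i = (x, (x : EReal)))) ∧
  (∀ x y : ℝ, x < y → 0 < mult φ (x, y) →
    Set.ncard {i : ℕ | a i = (x, (y : EReal))} = (mult φ (x, y)).toNat) ∧
  {i : ℕ | ∃ x : ℝ, a i = (x, (x : EReal))}.Infinite

noncomputable def dMatchSeq (a b : ℕ → ℝ × EReal) : ℝ≥0∞ :=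
  ⨅ σ : {σ : ℕ → ℕ // Function.Bijective σ}, ⨆ i : ℕ, eDist (a i) (b (σ.1 i))

noncomputable def dMatch {M N : Type*} [TopologicalSpace M] [TopologicalSpace N]
    (φ : M → ℝ) (ψ : N → ℝ) : ℝ≥0∞ :=
  sInf {s : ℝ≥0∞ | ∃ a b, IsRepSeq φ a ∧ IsRepSeq ψ b ∧ s = dMatchSeq a b}

/-!
For `y₁ ≤ y₂`, sending a component of `{φ ≤ y₁}` to the component of `{φ ≤ y₂}` containing it
maps the components meeting `{φ ≤ x}` onto those meeting `{φ ≤ x}`, for every `x ≤ y₁`. Passing from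
`x₁` to `x₂ ≥ x₁` therefore adds at least as many components at level `y₁` as at level `y₂`,
which is the inequality. The counts are finite because `{φ ≤ x}` is compact and is covered by
the open components of `{φ < y}`.
-/

theorem Set.ncard_image_sub_ncard_image_le {α β : Type*} (f : α → β) {s t : Set α}
    (hst : s ⊆ t) (ht : t.Finite) :
    ((f '' t).ncard : ℤ) - (f '' s).ncard ≤ (t.ncard : ℤ) - s.ncard := by
  have hdiff : f '' t \ f '' s ⊆ f '' (t \ s) := by
    rintro _ ⟨⟨a, ha, rfl⟩, hfa⟩
    exact ⟨a, ⟨ha, fun has => hfa ⟨a, has, rfl⟩⟩, rfl⟩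
  have himage := ncard_sdiff_add_ncard_of_subset (image_mono (f := f) hst) (ht.image f)
  have hdom := ncard_sdiff_add_ncard_of_subset hst ht
  have hle : (f '' t \ f '' s).ncard ≤ (t \ s).ncard :=
    (ncard_le_ncard hdiff (ht.sdiff.image f)).trans (ncard_image_le ht.sdiff)
  omega

section ConnectedComponents

variable {X : Type*} [TopologicalSpace X]

theorem biUnion_connectedComponentIn_of_subset {S T : Set X} (hST : S ⊆ T) {x : X}
    (hx : x ∈ S) :
    ⋃ y ∈ connectedComponentIn S x, connectedComponentIn T y = connectedComponentIn T x := by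
  apply Subset.antisymm
  · refine iUnion₂_subset fun y hy => ?_
    rw [← connectedComponentIn_eq (connectedComponentIn_mono x hST hy)]
  · exact subset_biUnion_of_mem (u := fun y => connectedComponentIn T y)
      (mem_connectedComponentIn hx)

theorem image_connectedComponentIn_eq_image_image {S T K : Set X} (hST : S ⊆ T) (hKS : K ⊆ S) :
    connectedComponentIn T '' K =
      (fun C => ⋃ y ∈ C, connectedComponentIn T y) '' (connectedComponentIn S '' K) := by
  rw [image_image]
  exact image_congr fun x hx => (biUnion_connectedComponentIn_of_subset hST (hKS hx)).symm

theorem IsCompact.finite_image_connectedComponentIn [LocallyConnectedSpace X] {K U F : Set X}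
    (hK : IsCompact K) (hU : IsOpen U) (hKU : K ⊆ U) (hUF : U ⊆ F) :
    (connectedComponentIn F '' K).Finite := by
  have hcover : K ⊆ ⋃ x ∈ K, connectedComponentIn U x :=
    fun x hx => mem_biUnion hx (mem_connectedComponentIn (hKU hx))
  obtain ⟨t, htK, htfin, htcover⟩ :=
    hK.elim_finite_subcover_image (fun _ _ => hU.connectedComponentIn) hcover
  refine (htfin.image (connectedComponentIn F)).subset ?_
  rintro _ ⟨x, hx, rfl⟩
  obtain ⟨z, hzt, hxz⟩ := mem_iUnion₂.mp (htcover hx)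
  have hzx : z ∈ connectedComponentIn F x :=
    isPreconnected_connectedComponentIn.subset_connectedComponentIn hxz
      ((connectedComponentIn_subset U z).trans hUF) (mem_connectedComponentIn (hKU (htK hzt)))
  exact ⟨z, hzt, (connectedComponentIn_eq hzx).symm⟩

end ConnectedComponents

section SizeFunction

variable {M : Type*} [TopologicalSpace M] {φ : M → ℝ}

theorem rsf_eq_ncard_image (x y : ℝ) :
    rsf φ x y = (connectedComponentIn {Q | φ Q ≤ y} '' {P | φ P ≤ x}).ncard := by
  unfold rsf
  congr 1
  ext C
  simp only [mem_ofPred_eq, mem_image, eq_comm]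

variable [CompactSpace M] [LocallyConnectedSpace M]

theorem finite_image_connectedComponentIn_sublevel (hφ : Continuous φ) {x y : ℝ} (hxy : x < y) :
    (connectedComponentIn {Q | φ Q ≤ y} '' {P | φ P ≤ x}).Finite :=
  (isClosed_le hφ continuous_const).isCompact.finite_image_connectedComponentIn
    (isOpen_lt hφ continuous_const) (fun _ hP => lt_of_le_of_lt hP hxy)
    fun _ (hQ : φ _ < y) => hQ.le

theorem rsf_quadrilateral_nonneg (hφ : Continuous φ) {x₁ x₂ y₁ y₂ : ℝ}
    (hx : x₁ ≤ x₂) (hxy : x₂ < y₁) (hy : y₁ ≤ y₂) :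
    0 ≤ (rsf φ x₂ y₁ : ℤ) - (rsf φ x₁ y₁ : ℤ) - (rsf φ x₂ y₂ : ℤ) + (rsf φ x₁ y₂ : ℤ) := by
  have hsub : ∀ {x}, x ≤ x₂ → {P | φ P ≤ x} ⊆ {Q | φ Q ≤ y₁} :=
    fun hx' _ hP => (hP.trans hx').trans hxy.le
  have hlevel : {Q | φ Q ≤ y₁} ⊆ {Q | φ Q ≤ y₂} := fun _ hQ => le_trans hQ hy
  have hbase : {P | φ P ≤ x₁} ⊆ {P | φ P ≤ x₂} := fun _ hP => le_trans hP hx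
  have hcount := ncard_image_sub_ncard_image_le
    (fun C => ⋃ y ∈ C, connectedComponentIn {Q | φ Q ≤ y₂} y) (image_mono hbase)
    (finite_image_connectedComponentIn_sublevel hφ hxy)
  rw [← image_connectedComponentIn_eq_image_image hlevel (hsub le_rfl),
    ← image_connectedComponentIn_eq_image_image hlevel (hsub hx)] at hcount
  simp only [rsf_eq_ncard_image]
  linarith

end SizeFunction

theorem multiplicity_nonneg_general
    {M : Type*} [TopologicalSpace M] [CompactSpace M] [LocallyConnectedSpace M] {φ : M → ℝ} (hφ : Continuous φ) :
    (∀ x₁ x₂ y₁ y₂ : ℝ, x₁ ≤ x₂ → x₂ < y₁ → y₁ ≤ y₂ →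
      0 ≤ (rsf φ x₂ y₁ : ℤ) - (rsf φ x₁ y₁ : ℤ) - (rsf φ x₂ y₂ : ℤ) + (rsf φ x₁ y₂ : ℤ)) ∧
    (∀ x y : ℝ, x < y → 0 ≤ mult φ (x, y)) := by
  refine ⟨fun x₁ x₂ y₁ y₂ => rsf_quadrilateral_nonneg hφ, fun x y hxy => ?_⟩
  refine le_csInf ⟨_, (y - x) / 4, by linarith, by linarith, rfl⟩ ?_
  rintro _ ⟨ε, hε, hlt, rfl⟩
  exact rsf_quadrilateral_nonneg hφ (by linarith) hlt (by linarith)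

theorem multiplicity_nonneg
    {M : Type*} [TopologicalSpace M] [CompactSpace M] [ConnectedSpace M] [LocallyConnectedSpace M] [T2Space M] {φ : M → ℝ} (hφ : Continuous φ) :
    (∀ x₁ x₂ y₁ y₂ : ℝ, x₁ ≤ x₂ → x₂ < y₁ → y₁ ≤ y₂ →
      0 ≤ (rsf φ x₂ y₁ : ℤ) - (rsf φ x₁ y₁ : ℤ) - (rsf φ x₂ y₂ : ℤ) + (rsf φ x₁ y₂ : ℤ)) ∧
    (∀ x y : ℝ, x < y → 0 ≤ mult φ (x, y)) :=
  multiplicity_nonneg_general hφ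
end

section
/- Optimal Matching Theorem: Let (a_i) and (b_i) be representative sequences for reduced size functions ℓ*₁ and ℓ*₂. Then the infimum over bijections σ : ℕ → ℕ of sup_i d(a_i, b_{σ(i)}) is attained: there exists a bijection σ̄ with max_i d(a_i, b_{σ̄(i)}) = d_match(ℓ*₁, ℓ*₂), and for every bijection σ with σ(0) = 0 the supremum sup_i d(a_i, b_{σ(i)}) is a maximum. -/
open Set Topology
open scoped ENNReal

/-!
Everything is measured by `diagDist`, the distance to the diagonal: it is `1`-Lipschitz for
`eDist`, and `eDist p q ≤ max (diagDist p) (diagDist q)`. Cornerpoints are locally finite: by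
bisection and the inclusion–exclusion inequality for `rsf`, a box strictly above the diagonal
contains at most `rsf φ β γ` of them, `(β, γ)` being its corner nearest the diagonal. So for every
`c > 0` only finitely many terms of a representative sequence are farther than `c` from the
diagonal, and every supremum `⨆ i, eDist (a i) (b (σ i))` is attained. If `dMatch > 0`, the costs
that matter form a finite set, so a bijection whose cost lies strictly between `dMatch` and the
next of these values is optimal. If `dMatch = 0`, the same finiteness isolates each cornerpoint,
so near-optimal bijections preserve multiplicities and the sequences match exactly. Two
representative sequences of one function differ by a permutation up to diagonal points, so
`dMatch` is the matching distance of any pair of them.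
-/

theorem Finset.exists_card_filter_lt_add_card_filter_gt {α : Type*} (T : Finset α) (f : α → ℝ)
    {p q : α} (hlt : f p < f q) :
    ∃ μ, f p < μ ∧ μ < f q ∧
      (T.filter (f · < μ)).card + (T.filter (μ < f ·)).card = T.card := by
  obtain ⟨μ, ⟨hpμ, hμq⟩, hμ⟩ := (Ioo_infinite hlt).exists_notMem_finset (T.image f)
  refine ⟨μ, hpμ, hμq, ?_⟩
  rw [← T.card_filter_add_card_filter_not (f · < μ)]
  congr 2
  refine Finset.filter_congr fun r hr ↦ ?_
  have : f r ≠ μ := fun h ↦ hμ (Finset.mem_image.2 ⟨r, hr, h⟩)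
  constructor
  · exact fun h ↦ not_lt.2 h.le
  · exact fun h ↦ (not_lt.1 h).lt_of_ne' this

theorem Set.Finite.exists_gap {ι α : Type*} [LinearOrder α] {S : Set ι} (hS : S.Finite)
    (f : ι → α) {η θ : α} (h : η < θ) :
    ∃ κ, η < κ ∧ κ ≤ θ ∧ ∀ s ∈ S, η < f s → κ ≤ f s := by
  obtain ⟨κ, hκ, hmin⟩ := exists_min_image (insert θ (f '' {s ∈ S | η < f s})) id
    (((hS.sep _).image f).insert θ) ⟨θ, mem_insert _ _⟩
  refine ⟨κ, ?_, hmin θ (mem_insert _ _), fun s hs hηs ↦ hmin _ (Or.inr ⟨s, ⟨hs, hηs⟩, rfl⟩)⟩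
  rcases hκ with rfl | ⟨s, ⟨-, hs⟩, rfl⟩
  exacts [h, hs]

theorem exists_eq_iSup_of_finite_setOf_lt {ι α : Type*} [Nonempty ι] [CompleteLinearOrder α]
    [DenselyOrdered α] {f : ι → α} (h : ∀ c, ⊥ < c → {i | c < f i}.Finite) :
    ∃ i, f i = ⨆ i, f i := by
  rcases eq_or_ne (⨆ i, f i) ⊥ with h₀ | h₀
  · exact ⟨Classical.arbitrary ι, (iSup_eq_bot.1 h₀ _).trans h₀.symm⟩
  obtain ⟨c, hc₀, hc⟩ := exists_between (bot_lt_iff_ne_bot.2 h₀)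
  obtain ⟨i₁, hi₁⟩ := lt_iSup_iff.1 hc
  obtain ⟨i₀, hi₀, hmax⟩ := exists_max_image _ f (h c hc₀) ⟨i₁, hi₁⟩
  refine ⟨i₀, le_antisymm (le_iSup f i₀) (iSup_le fun i ↦ ?_)⟩
  by_cases hi : c < f i
  exacts [hmax i hi, (not_lt.1 hi).trans hi₀.le]

universe u in
theorem exists_equiv_forall_comp_eq_of_mk_fiber_eq {α β : Type u} {γ : Type*} {f : α → γ}
    {g : β → γ}
    (h : ∀ c, Cardinal.mk {x // f x = c} = Cardinal.mk {y // g y = c}) :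
    ∃ e : α ≃ β, ∀ x, g (e x) = f x :=
  ⟨Equiv.ofFiberEquiv fun c ↦ (Cardinal.eq.1 (h c)).some, Equiv.ofFiberEquiv_map _⟩

theorem half_sub_le_max_abs_add (x y x' y' : ℝ) :
    (y - x) / 2 ≤ max |x - x'| |y - y'| + (y' - x') / 2 := by
  have := le_max_left |x - x'| |y - y'|
  have := le_max_right |x - x'| |y - y'|
  linarith [neg_abs_le (x - x'), le_abs_self (y - y')]

section SizeFunction

variable {M : Type*} [TopologicalSpace M] {φ : M → ℝ}

def sublevelComponents (φ : M → ℝ) (x y : ℝ) : Set (Set M) :=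
  {C | ∃ P, φ P ≤ x ∧ C = connectedComponentIn {Q | φ Q ≤ y} P}

theorem rsf_eq_ncard (φ : M → ℝ) (x y : ℝ) : rsf φ x y = (sublevelComponents φ x y).ncard := rfl

/- The components of the open set `{φ < y}` are open and cover the compact set `{φ ≤ x}`;
each of them lies in a single component of `{φ ≤ y}`. -/
theorem finite_sublevelComponents [CompactSpace M] [LocallyConnectedSpace M] (hφ : Continuous φ)
    {x y : ℝ} (hxy : x < y) : (sublevelComponents φ x y).Finite := by
  have hK : IsCompact {Q | φ Q ≤ x} := (isClosed_le hφ continuous_const).isCompact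
  obtain ⟨t, -, ht⟩ := hK.elim_nhds_subcover (fun z ↦ connectedComponentIn {Q | φ Q < y} z)
    fun z hz ↦ (isOpen_lt hφ continuous_const).connectedComponentIn.mem_nhds
      (mem_connectedComponentIn (lt_of_le_of_lt hz hxy))
  refine (t.finite_toSet.image fun z ↦ connectedComponentIn {Q | φ Q ≤ y} z).subset ?_
  rintro _ ⟨P, hP, rfl⟩
  obtain ⟨z, hzt, hPz⟩ := mem_iUnion₂.1 (ht hP)
  exact ⟨z, hzt, connectedComponentIn_eq
    (connectedComponentIn_mono _ (fun Q (hQ : φ Q < y) ↦ hQ.le) hPz)⟩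

theorem sublevelComponents_mono_left {x₁ x₂ y : ℝ} (h : x₁ ≤ x₂) :
    sublevelComponents φ x₁ y ⊆ sublevelComponents φ x₂ y := by
  rintro C ⟨P, hP, rfl⟩
  exact ⟨P, hP.trans h, rfl⟩

theorem rsf_mono_left [CompactSpace M] [LocallyConnectedSpace M] (hφ : Continuous φ)
    {x₁ x₂ y : ℝ} (h : x₁ ≤ x₂) (h₂ : x₂ < y) : rsf φ x₁ y ≤ rsf φ x₂ y :=
  ncard_le_ncard (sublevelComponents_mono_left h) (finite_sublevelComponents hφ h₂)

/-- For a connected `C ⊆ {φ ≤ y}`, the component of `{φ ≤ y}` containing `C`. -/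
def enlargeComponent (φ : M → ℝ) (y : ℝ) (C : Set M) : Set M :=
  ⋃ P ∈ C, connectedComponentIn {Q | φ Q ≤ y} P

theorem enlargeComponent_connectedComponentIn {y₁ y₂ : ℝ} (hy : y₁ ≤ y₂) {P : M}
    (hP : φ P ≤ y₁) :
    enlargeComponent φ y₂ (connectedComponentIn {Q | φ Q ≤ y₁} P)
      = connectedComponentIn {Q | φ Q ≤ y₂} P := by
  have hsub : connectedComponentIn {Q | φ Q ≤ y₁} P ⊆ connectedComponentIn {Q | φ Q ≤ y₂} P :=
    connectedComponentIn_mono _ fun Q (hQ : φ Q ≤ y₁) ↦ hQ.trans hy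
  refine Subset.antisymm (iUnion₂_subset fun R hR ↦ ?_) (subset_biUnion_of_mem
    (u := fun R ↦ connectedComponentIn {Q | φ Q ≤ y₂} R) (mem_connectedComponentIn hP))
  rw [← connectedComponentIn_eq (hsub hR)]

theorem image_enlargeComponent {x y₁ y₂ : ℝ} (hxy : x ≤ y₁) (hy : y₁ ≤ y₂) :
    enlargeComponent φ y₂ '' sublevelComponents φ x y₁ = sublevelComponents φ x y₂ := by
  ext C
  constructor
  · rintro ⟨_, ⟨P, hP, rfl⟩, rfl⟩
    exact ⟨P, hP, enlargeComponent_connectedComponentIn hy (hP.trans hxy)⟩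
  · rintro ⟨P, hP, rfl⟩
    exact ⟨_, ⟨P, hP, rfl⟩, enlargeComponent_connectedComponentIn hy (hP.trans hxy)⟩

theorem rsf_anti_right [CompactSpace M] [LocallyConnectedSpace M] (hφ : Continuous φ)
    {x y₁ y₂ : ℝ} (hx : x < y₁) (hy : y₁ ≤ y₂) : rsf φ x y₂ ≤ rsf φ x y₁ := by
  rw [rsf_eq_ncard, rsf_eq_ncard, ← image_enlargeComponent hx.le hy]
  exact ncard_image_le (finite_sublevelComponents hφ hx)

/- Enlarging the level from `y₁` to `y₂` maps the components counted at `(x₂, y₁)` onto those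
counted at `(x₂, y₂)`, and those already counted at `(x₁, y₁)` onto those counted at `(x₁, y₂)`;
so at most `rsf φ x₂ y₁ - rsf φ x₁ y₁` new ones appear. -/
theorem rsf_add_le [CompactSpace M] [LocallyConnectedSpace M] (hφ : Continuous φ)
    {x₁ x₂ y₁ y₂ : ℝ} (hx : x₁ ≤ x₂) (hy : y₁ ≤ y₂) (hxy : x₂ < y₁) :
    rsf φ x₁ y₁ + rsf φ x₂ y₂ ≤ rsf φ x₂ y₁ + rsf φ x₁ y₂ := by
  set S₁ := sublevelComponents φ x₁ y₁
  set S₂ := sublevelComponents φ x₂ y₁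
  have hfin₂ : S₂.Finite := finite_sublevelComponents hφ hxy
  have hS : S₁ ⊆ S₂ := sublevelComponents_mono_left hx
  have hcover : sublevelComponents φ x₂ y₂
      = sublevelComponents φ x₁ y₂ ∪ enlargeComponent φ y₂ '' (S₂ \ S₁) := by
    rw [← image_enlargeComponent (hx.trans hxy.le) hy, ← image_union, union_sdiff_cancel hS,
      image_enlargeComponent hxy.le hy]
  have hle : rsf φ x₂ y₂ ≤ rsf φ x₁ y₂ + (S₂ \ S₁).ncard := by
    rw [rsf_eq_ncard, rsf_eq_ncard, hcover]
    exact (ncard_union_le _ _).trans (Nat.add_le_add_left (ncard_image_le hfin₂.sdiff) _)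
  have hdiff : (S₂ \ S₁).ncard + rsf φ x₁ y₁ = rsf φ x₂ y₁ :=
    ncard_sdiff_add_ncard_of_subset hS hfin₂
  omega

theorem rsf_eq_zero {x y : ℝ} (h : ∀ Q, x < φ Q) : rsf φ x y = 0 := by
  have : sublevelComponents φ x y = ∅ :=
    eq_empty_iff_forall_notMem.2 fun _ ⟨P, hP, _⟩ ↦ (h P).not_ge hP
  rw [rsf_eq_ncard, this, ncard_empty]

theorem rsf_of_forall_le [PreconnectedSpace M] {x y : ℝ} (hy : ∀ Q, φ Q ≤ y) {Pm : M}
    (hPm : ∀ Q, φ Pm ≤ φ Q) : rsf φ x y = if φ Pm ≤ x then 1 else 0 := by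
  have huniv : ∀ P : M, connectedComponentIn {Q | φ Q ≤ y} P = univ := fun P ↦ by
    rw [show {Q | φ Q ≤ y} = univ from eq_univ_of_forall hy, connectedComponentIn_univ,
      PreconnectedSpace.connectedComponent_eq_univ]
  split_ifs with h
  · rw [rsf_eq_ncard, ncard_eq_one]
    refine ⟨univ, eq_singleton_iff_unique_mem.2 ⟨⟨Pm, h, (huniv Pm).symm⟩, ?_⟩⟩
    rintro _ ⟨P, -, rfl⟩
    exact huniv P
  · exact rsf_eq_zero fun Q ↦ (not_le.1 h).trans_le (hPm Q)

end SizeFunction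

section Cornerpoints

variable {M : Type*} [TopologicalSpace M] {φ : M → ℝ}

/-- `mult φ p` is the infimum of `rsfBox` over the squares `[p.1 ± ε] × [p.2 ± ε]`. -/
noncomputable def rsfBox (φ : M → ℝ) (α β γ δ : ℝ) : ℤ :=
  (rsf φ β γ : ℤ) - rsf φ α γ - rsf φ β δ + rsf φ α δ

theorem rsfBox_nonneg [CompactSpace M] [LocallyConnectedSpace M] (hφ : Continuous φ)
    {α β γ δ : ℝ} (hα : α ≤ β) (hγ : γ ≤ δ) (hβγ : β < γ) : 0 ≤ rsfBox φ α β γ δ := by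
  have := rsf_add_le hφ hα hγ hβγ
  unfold rsfBox
  omega

theorem rsfBox_split_fst (φ : M → ℝ) (α μ β γ δ : ℝ) :
    rsfBox φ α β γ δ = rsfBox φ α μ γ δ + rsfBox φ μ β γ δ := by
  unfold rsfBox; ring

theorem rsfBox_split_snd (φ : M → ℝ) (α β γ ν δ : ℝ) :
    rsfBox φ α β γ δ = rsfBox φ α β γ ν + rsfBox φ α β ν δ := by
  unfold rsfBox; ring

theorem rsfBox_le_rsf [CompactSpace M] [LocallyConnectedSpace M] (hφ : Continuous φ)
    {α β γ δ : ℝ} (hαγ : α < γ) (hγ : γ ≤ δ) : rsfBox φ α β γ δ ≤ rsf φ β γ := by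
  have := rsf_anti_right hφ hαγ hγ
  unfold rsfBox
  omega

theorem mult_le_rsfBox [CompactSpace M] [LocallyConnectedSpace M] (hφ : Continuous φ)
    {p : ℝ × ℝ} {ε : ℝ} (hε : 0 < ε) (h : p.1 + ε < p.2 - ε) :
    mult φ p ≤ rsfBox φ (p.1 - ε) (p.1 + ε) (p.2 - ε) (p.2 + ε) := by
  refine csInf_le ⟨0, ?_⟩ ⟨ε, hε, h, rfl⟩
  rintro _ ⟨ε', hε', h', rfl⟩
  exact rsfBox_nonneg hφ (by linarith) (by linarith) h'

theorem lt_of_mult_pos {p : ℝ × ℝ} (hm : 0 < mult φ p) : p.1 < p.2 := by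
  by_contra! h
  have hempty : {z : ℤ | ∃ ε : ℝ, 0 < ε ∧ p.1 + ε < p.2 - ε ∧
      z = (rsf φ (p.1 + ε) (p.2 - ε) : ℤ) - (rsf φ (p.1 - ε) (p.2 - ε) : ℤ)
        - (rsf φ (p.1 + ε) (p.2 + ε) : ℤ) + (rsf φ (p.1 - ε) (p.2 + ε) : ℤ)} = ∅ :=
    eq_empty_iff_forall_notMem.2 fun _ ⟨ε, hε, hlt, _⟩ ↦ by linarith
  rw [mult, hempty, Int.csInf_empty] at hm
  exact hm.false

theorem one_le_rsfBox_of_mult_pos [CompactSpace M] [LocallyConnectedSpace M]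
    (hφ : Continuous φ) {α β γ δ : ℝ} (hβγ : β < γ) {p : ℝ × ℝ}
    (hp : p ∈ Ioo α β ×ˢ Ioo γ δ) (hm : 0 < mult φ p) : 1 ≤ rsfBox φ α β γ δ := by
  obtain ⟨x, y⟩ := p
  obtain ⟨⟨hαx, hxβ⟩, ⟨hγy, hyδ⟩⟩ : (α < x ∧ x < β) ∧ γ < y ∧ y < δ := hp
  set ε := min (min (x - α) (β - x)) (min (min (y - γ) (δ - y)) ((y - x) / 3))
  have hε : 0 < ε := lt_min (lt_min (by linarith) (by linarith))
    (lt_min (lt_min (by linarith) (by linarith)) (by linarith))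
  have h₁ : ε ≤ x - α := (min_le_left _ _).trans (min_le_left _ _)
  have h₂ : ε ≤ β - x := (min_le_left _ _).trans (min_le_right _ _)
  have h₃ : ε ≤ y - γ := (min_le_right _ _).trans ((min_le_left _ _).trans (min_le_left _ _))
  have h₄ : ε ≤ δ - y := (min_le_right _ _).trans ((min_le_left _ _).trans (min_le_right _ _))
  have h₅ : ε ≤ (y - x) / 3 := (min_le_right _ _).trans (min_le_right _ _)
  have hcentre : mult φ (x, y) ≤ rsfBox φ (x - ε) (x + ε) (y - ε) (y + ε) :=
    mult_le_rsfBox hφ hε (by dsimp only; linarith)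
  have hsplit : rsfBox φ α β γ δ = rsfBox φ α (x - ε) γ δ + rsfBox φ (x + ε) β γ δ
      + rsfBox φ (x - ε) (x + ε) γ (y - ε) + rsfBox φ (x - ε) (x + ε) (y + ε) δ
      + rsfBox φ (x - ε) (x + ε) (y - ε) (y + ε) := by
    unfold rsfBox; ring
  have n₁ := rsfBox_nonneg hφ (show α ≤ x - ε by linarith) (by linarith : γ ≤ δ)
    (by linarith : x - ε < γ)
  have n₂ := rsfBox_nonneg hφ (show x + ε ≤ β by linarith) (by linarith : γ ≤ δ) hβγ
  have n₃ := rsfBox_nonneg hφ (show x - ε ≤ x + ε by linarith) (show γ ≤ y - ε by linarith)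
    (by linarith)
  have n₄ := rsfBox_nonneg hφ (show x - ε ≤ x + ε by linarith) (show y + ε ≤ δ by linarith)
    (by linarith)
  omega

/- Bisect the box along a vertical or horizontal line avoiding `T`; the pieces add up
by `rsfBox_split_fst` / `rsfBox_split_snd`, and a single point contributes at least `1`. -/
theorem card_le_rsfBox [CompactSpace M] [LocallyConnectedSpace M] (hφ : Continuous φ)
    (T : Finset (ℝ × ℝ)) {α β γ δ : ℝ} (hα : α ≤ β) (hγ : γ ≤ δ) (hβγ : β < γ)
    (hT : ∀ p ∈ T, p ∈ Ioo α β ×ˢ Ioo γ δ ∧ 0 < mult φ p) :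
    (T.card : ℤ) ≤ rsfBox φ α β γ δ := by
  induction T using Finset.strongInduction generalizing α β γ δ with
  | H T ih =>
  have hbox : ∀ r ∈ T, (α < r.1 ∧ r.1 < β) ∧ γ < r.2 ∧ r.2 < δ := fun r hr ↦ (hT r hr).1
  rcases le_or_gt T.card 1 with hT1 | hT1
  · rcases T.eq_empty_or_nonempty with rfl | ⟨p, hp⟩
    · simpa using rsfBox_nonneg hφ hα hγ hβγ
    · have := one_le_rsfBox_of_mult_pos hφ hβγ (hT p hp).1 (hT p hp).2
      omega
  obtain ⟨p, hp, q, hq, hpq⟩ := Finset.one_lt_card.1 hT1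
  by_cases hfst : p.1 = q.1
  · obtain ⟨p, hp, q, hq, hlt⟩ : ∃ p ∈ T, ∃ q ∈ T, p.2 < q.2 := by
      rcases lt_or_gt_of_ne fun h ↦ hpq (Prod.ext hfst h) with h | h
      exacts [⟨p, hp, q, hq, h⟩, ⟨q, hq, p, hp, h⟩]
    obtain ⟨ν, hpν, hνq, hcard⟩ := T.exists_card_filter_lt_add_card_filter_gt Prod.snd hlt
    have h₁ := ih (T.filter (·.2 < ν))
      (Finset.filter_ssubset.2 ⟨q, hq, show ¬q.2 < ν from not_lt.2 hνq.le⟩) hα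
      (show γ ≤ ν by linarith [hbox p hp]) hβγ fun r hr ↦ by
        obtain ⟨hrT, hrν⟩ := Finset.mem_filter.1 hr
        exact ⟨⟨(hbox r hrT).1, (hbox r hrT).2.1, hrν⟩, (hT r hrT).2⟩
    have h₂ := ih (T.filter (ν < ·.2))
      (Finset.filter_ssubset.2 ⟨p, hp, show ¬ν < p.2 from not_lt.2 hpν.le⟩) hα
      (show ν ≤ δ by linarith [hbox q hq]) (show β < ν by linarith [hbox p hp]) fun r hr ↦ by
        obtain ⟨hrT, hνr⟩ := Finset.mem_filter.1 hr
        exact ⟨⟨(hbox r hrT).1, hνr, (hbox r hrT).2.2⟩, (hT r hrT).2⟩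
    rw [rsfBox_split_snd φ α β γ ν δ]
    omega
  · obtain ⟨p, hp, q, hq, hlt⟩ : ∃ p ∈ T, ∃ q ∈ T, p.1 < q.1 := by
      rcases lt_or_gt_of_ne hfst with h | h
      exacts [⟨p, hp, q, hq, h⟩, ⟨q, hq, p, hp, h⟩]
    obtain ⟨μ, hpμ, hμq, hcard⟩ := T.exists_card_filter_lt_add_card_filter_gt Prod.fst hlt
    have h₁ := ih (T.filter (·.1 < μ))
      (Finset.filter_ssubset.2 ⟨q, hq, show ¬q.1 < μ from not_lt.2 hμq.le⟩)
      (show α ≤ μ by linarith [hbox p hp]) hγ (show μ < γ by linarith [hbox q hq]) fun r hr ↦ by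
        obtain ⟨hrT, hrμ⟩ := Finset.mem_filter.1 hr
        exact ⟨⟨⟨(hbox r hrT).1.1, hrμ⟩, (hbox r hrT).2⟩, (hT r hrT).2⟩
    have h₂ := ih (T.filter (μ < ·.1))
      (Finset.filter_ssubset.2 ⟨p, hp, show ¬μ < p.1 from not_lt.2 hpμ.le⟩)
      (show μ ≤ β by linarith [hbox q hq]) hγ hβγ fun r hr ↦ by
        obtain ⟨hrT, hμr⟩ := Finset.mem_filter.1 hr
        exact ⟨⟨⟨hμr, (hbox r hrT).1.2⟩, (hbox r hrT).2⟩, (hT r hrT).2⟩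
    rw [rsfBox_split_fst φ α μ β γ δ]
    omega

theorem finite_setOf_mult_pos_inter_box [CompactSpace M] [LocallyConnectedSpace M]
    (hφ : Continuous φ) {α β γ δ : ℝ} (hβγ : β < γ) :
    {p | p ∈ Ioo α β ×ˢ Ioo γ δ ∧ 0 < mult φ p}.Finite := by
  by_contra hinf
  obtain ⟨p, ⟨⟨hαp, hpβ⟩, ⟨hγp, hpδ⟩⟩, -⟩ := Set.Infinite.nonempty hinf
  obtain ⟨T, hTs, hTcard⟩ := Set.Infinite.exists_subset_card_eq hinf (rsf φ β γ + 1)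
  have hle := card_le_rsfBox hφ T (by linarith) (by linarith) hβγ fun r hr ↦ hTs hr
  have := rsfBox_le_rsf hφ (α := α) (β := β) (by linarith) (show γ ≤ δ by linarith)
  omega

theorem fst_ge_of_mult_pos [CompactSpace M] [LocallyConnectedSpace M] (hφ : Continuous φ)
    {p : ℝ × ℝ} (hm : 0 < mult φ p) {Pm : M} (hPm : ∀ Q, φ Pm ≤ φ Q) : φ Pm ≤ p.1 := by
  by_contra! h
  have hp := lt_of_mult_pos hm
  set ε := min ((φ Pm - p.1) / 2) ((p.2 - p.1) / 3)
  have hε : 0 < ε := lt_min (by linarith) (by linarith)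
  have h₁ : ε ≤ (φ Pm - p.1) / 2 := min_le_left _ _
  have h₂ : ε ≤ (p.2 - p.1) / 3 := min_le_right _ _
  have hzero : ∀ t y, t < φ Pm → rsf φ t y = 0 := fun t y ht ↦
    rsf_eq_zero fun Q ↦ ht.trans_le (hPm Q)
  have := mult_le_rsfBox hφ hε (by linarith)
  rw [rsfBox, hzero (p.1 + ε) _ (by linarith), hzero (p.1 - ε) _ (by linarith),
    hzero (p.1 + ε) _ (by linarith), hzero (p.1 - ε) _ (by linarith)] at this
  omega

theorem snd_le_of_mult_pos [CompactSpace M] [LocallyConnectedSpace M] (hφ : Continuous φ)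
    {p : ℝ × ℝ} (hm : 0 < mult φ p) {PM : M} (hPM : ∀ Q, φ Q ≤ φ PM) : p.2 ≤ φ PM := by
  by_contra! h
  have hp := lt_of_mult_pos hm
  set ε := min ((p.2 - φ PM) / 2) ((p.2 - p.1) / 3)
  have hε : 0 < ε := lt_min (by linarith) (by linarith)
  have h₁ : ε ≤ (p.2 - φ PM) / 2 := min_le_left _ _
  have h₂ : ε ≤ (p.2 - p.1) / 3 := min_le_right _ _
  have hlevel : {Q | φ Q ≤ p.2 - ε} = {Q | φ Q ≤ p.2 + ε} := by
    ext Q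
    simp only [mem_ofPred_eq]
    constructor <;> intro <;> linarith [hPM Q]
  have hrsf : ∀ t, rsf φ t (p.2 - ε) = rsf φ t (p.2 + ε) := fun t ↦ by
    simp only [rsf, hlevel]
  have := mult_le_rsfBox hφ hε (by linarith)
  rw [rsfBox, hrsf, hrsf] at this
  omega

/- Cornerpoints lie in the compact square `[min φ, max φ]²`, which is covered by finitely
many boxes of radius `c / 4`; each of them either misses the region `c ≤ p.2 - p.1` or lies
strictly above the diagonal, where `finite_setOf_mult_pos_inter_box` applies. -/
theorem finite_setOf_mult_pos [CompactSpace M] [LocallyConnectedSpace M] [Nonempty M]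
    (hφ : Continuous φ) {c : ℝ} (hc : 0 < c) :
    {p : ℝ × ℝ | 0 < mult φ p ∧ c ≤ p.2 - p.1}.Finite := by
  obtain ⟨Pm, hPm⟩ := hφ.exists_forall_le (by simp)
  obtain ⟨PM, hPM⟩ := hφ.exists_forall_ge (by simp)
  set S := {p : ℝ × ℝ | 0 < mult φ p ∧ c ≤ p.2 - p.1}
  set r := c / 4 with hr
  set U : ℝ × ℝ → Set (ℝ × ℝ) := fun z ↦ Ioo (z.1 - r) (z.1 + r) ×ˢ Ioo (z.2 - r) (z.2 + r)
  set K := Icc (φ Pm) (φ PM) ×ˢ Icc (φ Pm) (φ PM)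
  have hSK : S ⊆ K := fun p ⟨hm, _⟩ ↦ by
    have := fst_ge_of_mult_pos hφ hm hPm
    have := snd_le_of_mult_pos hφ hm hPM
    have := lt_of_mult_pos hm
    exact ⟨⟨by linarith, by linarith⟩, ⟨by linarith, by linarith⟩⟩
  obtain ⟨t, -, ht⟩ := (isCompact_Icc.prod isCompact_Icc : IsCompact K).elim_nhds_subcover U
    fun z _ ↦ (isOpen_Ioo.prod isOpen_Ioo).mem_nhds
      ⟨⟨by linarith, by linarith⟩, ⟨by linarith, by linarith⟩⟩
  have hfin : ∀ z, (S ∩ U z).Finite := fun z ↦ by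
    by_cases hz : z.1 + r < z.2 - r
    · exact (finite_setOf_mult_pos_inter_box hφ hz).subset fun p ⟨⟨hm, _⟩, hp⟩ ↦ ⟨hp, hm⟩
    · refine Set.Finite.subset finite_empty fun p ⟨⟨_, hp⟩, ⟨h₁, _⟩, ⟨_, h₂⟩⟩ ↦ ?_
      exact hz (by linarith)
  refine (t.finite_toSet.biUnion fun z _ ↦ hfin z).subset fun p hp ↦ ?_
  obtain ⟨z, hz, hpz⟩ := mem_iUnion₂.1 (ht (hSK hp))
  exact mem_iUnion₂.2 ⟨z, hz, hp, hpz⟩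

/- `rsf φ x y` is `1` or `0` according as `min φ ≤ x` once `y ≥ max φ`, so the difference
defining `multInf φ k` vanishes for small `ε` unless `k = min φ`. -/
theorem eq_of_multInf_pos [CompactSpace M] [ConnectedSpace M] [LocallyConnectedSpace M]
    (hφ : Continuous φ) {k : ℝ} (hk : 0 < multInf φ k) {Pm : M} (hPm : ∀ Q, φ Pm ≤ φ Q) :
    k = φ Pm := by
  by_contra hne
  obtain ⟨PM, hPM⟩ := hφ.exists_forall_ge (by simp)
  have hlarge : ∀ᶠ ε in 𝓝[>] (0 : ℝ), max (k + 1) (φ PM) < 1 / ε := by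
    simpa only [one_div] using tendsto_inv_nhdsGT_zero.eventually_gt_atTop _
  have hsmall : ∀ᶠ ε in 𝓝[>] (0 : ℝ), ε < min 1 |k - φ Pm| := by
    filter_upwards [Ioo_mem_nhdsGT (lt_min one_pos (abs_pos.2 (sub_ne_zero.2 hne)))]
      with ε hε using hε.2
  obtain ⟨ε, ⟨hε₁, hε₂⟩, hε⟩ := ((hlarge.and hsmall).and self_mem_nhdsWithin).exists
  rw [max_lt_iff] at hε₁
  rw [lt_min_iff, lt_abs] at hε₂
  have hle : multInf φ k ≤ (rsf φ (k + ε) (1 / ε) : ℤ) - rsf φ (k - ε) (1 / ε) := by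
    refine csInf_le ⟨0, ?_⟩ ⟨ε, hε, by linarith, rfl⟩
    rintro _ ⟨ε', hε', h', rfl⟩
    have := rsf_mono_left hφ (show k - ε' ≤ k + ε' by linarith) h'
    omega
  have htop : ∀ Q, φ Q ≤ 1 / ε := fun Q ↦ (hPM Q).trans hε₁.2.le
  rw [rsf_of_forall_le htop hPm, rsf_of_forall_le htop hPm] at hle
  rcases hε₂.2 with h | h
  · rw [if_pos (by linarith), if_pos (by linarith)] at hle
    omega
  · rw [if_neg (by linarith), if_neg (by linarith)] at hle
    omega

end Cornerpoints

section PseudoMetric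

theorem eDist_of_ne_top {p q : ℝ × EReal} (hp : p.2 ≠ ⊤) (hq : q.2 ≠ ⊤) :
    eDist p q = ENNReal.ofReal (min (max |p.1 - q.1| |p.2.toReal - q.2.toReal|)
      (max ((p.2.toReal - p.1) / 2) ((q.2.toReal - q.1) / 2))) := by
  simp [eDist, hp, hq]

theorem eDist_of_eq_top {p q : ℝ × EReal} (hp : p.2 = ⊤) (hq : q.2 = ⊤) :
    eDist p q = ENNReal.ofReal |p.1 - q.1| := by
  simp [eDist, hp, hq]

theorem eDist_of_eq_top_of_ne_top {p q : ℝ × EReal} (hp : p.2 = ⊤) (hq : q.2 ≠ ⊤) :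
    eDist p q = ⊤ := by
  simp [eDist, hp, hq]

theorem eDist_comm (p q : ℝ × EReal) : eDist p q = eDist q p := by
  unfold eDist
  by_cases hp : p.2 = ⊤ <;> by_cases hq : q.2 = ⊤ <;>
    simp [hp, hq, abs_sub_comm, max_comm]

theorem eDist_self (p : ℝ × EReal) : eDist p p = 0 := by
  by_cases hp : p.2 = ⊤
  · simp [eDist_of_eq_top hp hp]
  · simp [eDist_of_ne_top hp hp]

noncomputable def diagDist (p : ℝ × EReal) : ℝ≥0∞ := eDist p (p.1, p.1)

theorem diagDist_of_eq_top {p : ℝ × EReal} (hp : p.2 = ⊤) : diagDist p = ⊤ :=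
  eDist_of_eq_top_of_ne_top hp (EReal.coe_ne_top _)

theorem diagDist_of_ne_top {p : ℝ × EReal} (hp : p.2 ≠ ⊤) :
    diagDist p = ENNReal.ofReal ((p.2.toReal - p.1) / 2) := by
  rw [diagDist, eDist_of_ne_top hp (EReal.coe_ne_top _)]
  simp only [EReal.toReal_coe, sub_self, abs_zero, zero_div]
  rcases le_total (p.2.toReal - p.1) 0 with h | h
  · rw [ENNReal.ofReal_of_nonpos (by linarith : (p.2.toReal - p.1) / 2 ≤ 0),
      ENNReal.ofReal_of_nonpos]
    exact (min_le_right _ _).trans (max_le (by linarith) le_rfl)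
  · congr 1
    rw [abs_of_nonneg h, max_eq_right h, max_eq_left (by linarith), min_eq_right (by linarith)]

theorem eDist_eq_diagDist {p q : ℝ × EReal} (hq : diagDist q = 0) : eDist p q = diagDist p := by
  have hq_top : q.2 ≠ ⊤ := fun h ↦ by simp [diagDist_of_eq_top h] at hq
  rw [diagDist_of_ne_top hq_top, ENNReal.ofReal_eq_zero] at hq
  by_cases hp : p.2 = ⊤
  · rw [eDist_of_eq_top_of_ne_top hp hq_top, diagDist_of_eq_top hp]
  rw [eDist_of_ne_top hp hq_top, diagDist_of_ne_top hp]
  rcases le_total ((p.2.toReal - p.1) / 2) 0 with h | h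
  · rw [ENNReal.ofReal_of_nonpos h, ENNReal.ofReal_of_nonpos]
    exact (min_le_right _ _).trans (max_le h hq)
  · have := half_sub_le_max_abs_add p.1 p.2.toReal q.1 q.2.toReal
    rw [min_eq_right (max_le (by linarith) (hq.trans (le_max_of_le_left (abs_nonneg _)))),
      max_eq_left (by linarith)]

theorem eDist_le_max_diagDist (p q : ℝ × EReal) : eDist p q ≤ max (diagDist p) (diagDist q) := by
  by_cases hp : p.2 = ⊤
  · simp [diagDist_of_eq_top hp]
  by_cases hq : q.2 = ⊤
  · simp [diagDist_of_eq_top hq]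
  rw [eDist_of_ne_top hp hq, diagDist_of_ne_top hp, diagDist_of_ne_top hq, ← ENNReal.ofReal_max]
  exact ENNReal.ofReal_le_ofReal (min_le_right _ _)

theorem diagDist_le_eDist_add (p q : ℝ × EReal) : diagDist p ≤ eDist p q + diagDist q := by
  by_cases hq₀ : diagDist q = 0
  · simp [eDist_eq_diagDist hq₀]
  by_cases hq : q.2 = ⊤
  · simp [diagDist_of_eq_top hq]
  by_cases hp : p.2 = ⊤
  · simp [eDist_of_eq_top_of_ne_top hp hq]
  rw [diagDist_of_ne_top hq, ENNReal.ofReal_eq_zero, not_le] at hq₀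
  rw [eDist_of_ne_top hp hq, diagDist_of_ne_top hp, diagDist_of_ne_top hq]
  refine (ENNReal.ofReal_le_ofReal ?_).trans ENNReal.ofReal_add_le
  have := half_sub_le_max_abs_add p.1 p.2.toReal q.1 q.2.toReal
  rw [← min_add_add_right]
  exact le_min (by linarith)
    (by linarith [le_max_left ((p.2.toReal - p.1) / 2) ((q.2.toReal - q.1) / 2)])

theorem eq_of_eDist_eq_zero {p q : ℝ × EReal} (hp : p.2 ≠ ⊥) (hq : q.2 ≠ ⊥)
    (hpd : diagDist p ≠ 0) (h : eDist p q = 0) : p = q := by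
  by_cases hp_top : p.2 = ⊤
  · by_cases hq_top : q.2 = ⊤
    · rw [eDist_of_eq_top hp_top hq_top, ENNReal.ofReal_eq_zero, abs_nonpos_iff, sub_eq_zero] at h
      exact Prod.ext h (hp_top.trans hq_top.symm)
    · simp [eDist_of_eq_top_of_ne_top hp_top hq_top] at h
  by_cases hq_top : q.2 = ⊤
  · rw [eDist_comm, eDist_of_eq_top_of_ne_top hq_top hp_top] at h
    exact absurd h ENNReal.top_ne_zero
  rw [diagDist_of_ne_top hp_top, Ne, ENNReal.ofReal_eq_zero, not_le] at hpd
  rw [eDist_of_ne_top hp_top hq_top, ENNReal.ofReal_eq_zero, min_le_iff] at h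
  have hA : max |p.1 - q.1| |p.2.toReal - q.2.toReal| ≤ 0 :=
    h.resolve_right fun h' ↦ by
      linarith [le_max_left ((p.2.toReal - p.1) / 2) ((q.2.toReal - q.1) / 2)]
  rw [max_le_iff, abs_nonpos_iff, abs_nonpos_iff, sub_eq_zero, sub_eq_zero] at hA
  refine Prod.ext hA.1 ?_
  rw [← EReal.coe_toReal hp_top hp, ← EReal.coe_toReal hq_top hq, hA.2]

noncomputable def diagClass (p : ℝ × EReal) : Option (ℝ × EReal) :=
  open scoped Classical in if diagDist p = 0 then none else some p

theorem eDist_congr_left {p p' : ℝ × EReal} (h : diagClass p = diagClass p') (q : ℝ × EReal) :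
    eDist p q = eDist p' q := by
  unfold diagClass at h
  split_ifs at h with hp hp'
  · rw [eDist_comm, eDist_eq_diagDist hp, eDist_comm, eDist_eq_diagDist hp']
  · rw [Option.some_injective _ h]

theorem eDist_congr {p p' q q' : ℝ × EReal} (hp : diagClass p = diagClass p')
    (hq : diagClass q = diagClass q') : eDist p q = eDist p' q' := by
  rw [eDist_congr_left hp, eDist_comm, eDist_congr_left hq, eDist_comm]

theorem diagClass_eq_none {p : ℝ × EReal} : diagClass p = none ↔ diagDist p = 0 := by
  unfold diagClass; split_ifs with h <;> simp [h]

theorem diagClass_eq_some {p q : ℝ × EReal} :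
    diagClass p = some q ↔ diagDist p ≠ 0 ∧ p = q := by
  unfold diagClass; split_ifs with h <;> simp [h]

theorem exists_equiv_diagClass_eq_of_ncard_fiber_eq {a b : ℕ → ℝ × EReal}
    (ha : {i | diagDist (a i) = 0}.Infinite) (hb : {j | diagDist (b j) = 0}.Infinite)
    (hfin : ∀ p, diagDist p ≠ 0 → {i | a i = p}.Finite ∧ {j | b j = p}.Finite)
    (hcard : ∀ p, diagDist p ≠ 0 → {i | a i = p}.ncard = {j | b j = p}.ncard) :
    ∃ e : ℕ ≃ ℕ, ∀ i, diagClass (b (e i)) = diagClass (a i) := by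
  refine exists_equiv_forall_comp_eq_of_mk_fiber_eq (f := fun i ↦ diagClass (a i))
    (g := fun j ↦ diagClass (b j)) fun l ↦ ?_
  rcases l with - | p
  · simp only [diagClass_eq_none]
    have := ha.to_subtype
    have := hb.to_subtype
    exact (Cardinal.mk_eq_aleph0 {i | diagDist (a i) = 0}).trans
      (Cardinal.mk_eq_aleph0 {j | diagDist (b j) = 0}).symm
  simp only [diagClass_eq_some]
  by_cases hp : diagDist p = 0
  · have hempty : ∀ c : ℕ → ℝ × EReal, IsEmpty {i // diagDist (c i) ≠ 0 ∧ c i = p} :=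
      fun c ↦ ⟨fun ⟨_, hi, he⟩ ↦ hi (he ▸ hp)⟩
    rw [@Cardinal.mk_eq_zero _ (hempty a), @Cardinal.mk_eq_zero _ (hempty b)]
  have fiber : ∀ c : ℕ → ℝ × EReal, Cardinal.mk {i // diagDist (c i) ≠ 0 ∧ c i = p}
      = Cardinal.mk {i | c i = p} := fun c ↦ Cardinal.mk_congr <|
    Equiv.subtypeEquivRight fun i ↦ ⟨And.right, fun h ↦ ⟨h ▸ hp, h⟩⟩
  rw [fiber, fiber, ← Set.cast_ncard (hfin p hp).1, ← Set.cast_ncard (hfin p hp).2, hcard p hp]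

theorem dMatchSeq_le_iSup {a b : ℕ → ℝ × EReal} {σ : ℕ → ℕ} (hσ : Function.Bijective σ) :
    dMatchSeq a b ≤ ⨆ i, eDist (a i) (b (σ i)) :=
  iInf_le (fun σ : {σ : ℕ → ℕ // Function.Bijective σ} ↦ ⨆ i, eDist (a i) (b (σ.1 i))) ⟨σ, hσ⟩

theorem exists_forall_eDist_lt_of_dMatchSeq_lt {a b : ℕ → ℝ × EReal} {κ : ℝ≥0∞}
    (h : dMatchSeq a b < κ) :
    ∃ σ : ℕ → ℕ, Function.Bijective σ ∧ ∀ i, eDist (a i) (b (σ i)) < κ := by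
  obtain ⟨⟨σ, hσ⟩, hlt⟩ := iInf_lt_iff.1 h
  exact ⟨σ, hσ, fun i ↦ (le_iSup (fun i ↦ eDist (a i) (b (σ i))) i).trans_lt hlt⟩

theorem dMatchSeq_comm (a b : ℕ → ℝ × EReal) : dMatchSeq a b = dMatchSeq b a := by
  suffices ∀ a b : ℕ → ℝ × EReal, dMatchSeq b a ≤ dMatchSeq a b from
    le_antisymm (this b a) (this a b)
  intro a b
  refine le_iInf fun ⟨σ, hσ⟩ ↦ ?_
  set e := Equiv.ofBijective σ hσ
  calc dMatchSeq b a ≤ ⨆ j, eDist (b j) (a (e.symm j)) := dMatchSeq_le_iSup e.symm.bijective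
    _ = ⨆ i, eDist (b (e i)) (a (e.symm (e i))) := (e.iSup_comp (g := fun j ↦ _)).symm
    _ = ⨆ i, eDist (a i) (b (σ i)) := by simp [e, eDist_comm]

theorem dMatchSeq_le_of_diagClass_eq {a b a' b' : ℕ → ℝ × EReal} (ea eb : ℕ ≃ ℕ)
    (ha : ∀ i, diagClass (a' (ea i)) = diagClass (a i))
    (hb : ∀ j, diagClass (b' (eb j)) = diagClass (b j)) :
    dMatchSeq a b ≤ dMatchSeq a' b' := by
  refine le_iInf fun ⟨σ', hσ'⟩ ↦ ?_
  refine (dMatchSeq_le_iSup (σ := eb.symm ∘ σ' ∘ ea)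
    (eb.symm.bijective.comp (hσ'.comp ea.bijective))).trans (iSup_le fun i ↦ ?_)
  have hb' := hb (eb.symm (σ' (ea i)))
  rw [Equiv.apply_symm_apply] at hb'
  exact (eDist_congr (ha i).symm hb'.symm).le.trans (le_iSup (fun j ↦ eDist (a' j) (b' (σ' j))) _)

end PseudoMetric

namespace IsRepSeq

variable {M N : Type*} [TopologicalSpace M] [TopologicalSpace N] {φ : M → ℝ} {ψ : N → ℝ}
  {a a' b : ℕ → ℝ × EReal}

theorem exists_eq_coe_of_pos (ha : IsRepSeq φ a) {i : ℕ} (hi : 0 < i) :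
    ∃ x y : ℝ, a i = (x, (y : EReal)) ∧ x ≤ y ∧ (x < y → 0 < mult φ (x, y)) := by
  rcases ha.2.1 i hi with ⟨x, y, h, hxy, hm⟩ | ⟨x, h⟩
  · exact ⟨x, y, h, hxy.le, fun _ ↦ hm⟩
  · exact ⟨x, x, h, le_rfl, fun h ↦ (lt_irrefl x h).elim⟩

theorem snd_ne_bot (ha : IsRepSeq φ a) (i : ℕ) : (a i).2 ≠ ⊥ := by
  rcases Nat.eq_zero_or_pos i with rfl | hi
  · obtain ⟨k, hk, -⟩ := ha.1
    simp [hk]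
  · obtain ⟨x, y, h, -⟩ := ha.exists_eq_coe_of_pos hi
    simp [h]

theorem eq_zero_of_snd_eq_top (ha : IsRepSeq φ a) {i : ℕ} (h : (a i).2 = ⊤) : i = 0 := by
  by_contra hi
  obtain ⟨x, y, hxy, -⟩ := ha.exists_eq_coe_of_pos (Nat.pos_of_ne_zero hi)
  simp [hxy] at h

theorem mult_pos_of_eq (ha : IsRepSeq φ a) {i : ℕ} {x y : ℝ} (hxy : x < y)
    (h : a i = (x, (y : EReal))) : 0 < mult φ (x, y) := by
  have hi : i ≠ 0 := by
    rintro rfl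
    obtain ⟨k, hk, -⟩ := ha.1
    simp [hk] at h
  obtain ⟨x', y', h', -, hm⟩ := ha.exists_eq_coe_of_pos (Nat.pos_of_ne_zero hi)
  obtain ⟨rfl, rfl⟩ : x' = x ∧ y' = y := by simpa [h] using h'.symm
  exact hm hxy

theorem ncard_fiber (ha : IsRepSeq φ a) {x y : ℝ} (hxy : x < y) :
    {i | a i = (x, (y : EReal))}.ncard = (mult φ (x, y)).toNat := by
  by_cases hm : 0 < mult φ (x, y)
  · exact ha.2.2.1 x y hxy hm
  · have : {i | a i = (x, (y : EReal))} = ∅ :=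
      eq_empty_iff_forall_notMem.2 fun i hi ↦ hm (ha.mult_pos_of_eq hxy hi)
    rw [this, ncard_empty, Int.toNat_of_nonpos (not_lt.1 hm)]

theorem finite_fiber_of_lt (ha : IsRepSeq φ a) {x y : ℝ} (hxy : x < y) :
    {i | a i = (x, (y : EReal))}.Finite := by
  by_cases hm : 0 < mult φ (x, y)
  · exact finite_of_ncard_pos (by rw [ha.ncard_fiber hxy]; omega)
  · exact Set.Finite.subset finite_empty fun i hi ↦ hm (ha.mult_pos_of_eq hxy hi)

theorem exists_diagDist_eq_of_pos (ha : IsRepSeq φ a) {i : ℕ} (hi : 0 < i) :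
    ∃ x y : ℝ, a i = (x, (y : EReal)) ∧ diagDist (a i) = ENNReal.ofReal ((y - x) / 2) ∧
      (x < y → 0 < mult φ (x, y)) := by
  obtain ⟨x, y, h, -, hm⟩ := ha.exists_eq_coe_of_pos hi
  exact ⟨x, y, h, by simp [h, diagDist_of_ne_top], hm⟩

theorem finite_setOf_lt_diagDist [CompactSpace M] [LocallyConnectedSpace M] [Nonempty M]
    (hφ : Continuous φ) (ha : IsRepSeq φ a) {c : ℝ≥0∞} (hc : c ≠ 0) :
    {i | c < diagDist (a i)}.Finite := by
  rcases eq_or_ne c ⊤ with rfl | hc_top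
  · simp
  have hc' : 0 < c.toReal := ENNReal.toReal_pos hc hc_top
  refine ((finite_singleton 0).union ((finite_setOf_mult_pos hφ (c := 2 * c.toReal)
    (by positivity)).biUnion fun p hp ↦ ha.finite_fiber_of_lt (lt_of_mult_pos hp.1))).subset ?_
  intro i hi
  rcases Nat.eq_zero_or_pos i with rfl | hpos
  · exact Or.inl rfl
  obtain ⟨x, y, h, hd, hm⟩ := ha.exists_diagDist_eq_of_pos hpos
  rw [mem_ofPred_eq, hd, ← ENNReal.ofReal_toReal hc_top,
    ENNReal.ofReal_lt_ofReal_iff_of_nonneg hc'.le] at hi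
  exact Or.inr (mem_iUnion₂.2 ⟨(x, y), ⟨hm (by linarith), by dsimp only; linarith⟩, h⟩)

theorem finite_fiber [CompactSpace M] [LocallyConnectedSpace M] [Nonempty M]
    (hφ : Continuous φ) (ha : IsRepSeq φ a) {p : ℝ × EReal} (hp : diagDist p ≠ 0) :
    {i | a i = p}.Finite := by
  obtain ⟨c, hc, hcp⟩ := exists_between (pos_iff_ne_zero.2 hp)
  exact (ha.finite_setOf_lt_diagDist hφ hc.ne').subset fun i (hi : a i = p) ↦ by
    rwa [mem_ofPred_eq, hi]

theorem infinite_setOf_diagDist_eq_zero (ha : IsRepSeq φ a) :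
    {i | diagDist (a i) = 0}.Infinite :=
  ha.2.2.2.mono fun i hi ↦ by
    obtain ⟨x, hx⟩ := hi
    simp [hx, diagDist_of_ne_top]

theorem finite_setOf_eDist_lt [CompactSpace M] [LocallyConnectedSpace M] [Nonempty M]
    (hφ : Continuous φ) (ha : IsRepSeq φ a) {p : ℝ × EReal} {θ : ℝ≥0∞}
    (hθ : θ < diagDist p) : {i | eDist p (a i) < θ}.Finite := by
  -- the cap `1` covers `diagDist p = diagDist (a i) = ⊤`, where the Lipschitz bound is void
  refine (ha.finite_setOf_lt_diagDist hφ (c := min (diagDist p - θ) 1)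
    (by simp [tsub_eq_zero_iff_le, not_le.2 hθ])).subset fun i (hi : eDist p (a i) < θ) ↦ ?_
  rcases eq_or_ne (diagDist (a i)) ⊤ with htop | hfin
  · show min (diagDist p - θ) 1 < diagDist (a i)
    rw [htop]
    exact (min_le_right _ _).trans_lt ENNReal.one_lt_top
  refine (min_le_left _ _).trans_lt (ENNReal.sub_lt_of_lt_add hθ.le ?_)
  calc diagDist p ≤ eDist p (a i) + diagDist (a i) := diagDist_le_eDist_add _ _
    _ < θ + diagDist (a i) := ENNReal.add_lt_add_right hfin hi
    _ = diagDist (a i) + θ := add_comm _ _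

theorem apply_zero_eq [CompactSpace M] [ConnectedSpace M] [LocallyConnectedSpace M]
    (hφ : Continuous φ) (ha : IsRepSeq φ a) (ha' : IsRepSeq φ a') : a 0 = a' 0 := by
  obtain ⟨Pm, hPm⟩ := hφ.exists_forall_le (by simp)
  obtain ⟨k, hk, hm⟩ := ha.1
  obtain ⟨k', hk', hm'⟩ := ha'.1
  rw [hk, hk', eq_of_multInf_pos hφ hm hPm, eq_of_multInf_pos hφ hm' hPm]

theorem ncard_fiber_eq [CompactSpace M] [ConnectedSpace M] [LocallyConnectedSpace M]
    (hφ : Continuous φ) (ha : IsRepSeq φ a) (ha' : IsRepSeq φ a') {p : ℝ × EReal}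
    (hp : diagDist p ≠ 0) : {i | a i = p}.ncard = {i | a' i = p}.ncard := by
  obtain ⟨x, z⟩ := p
  induction z using EReal.rec with
  | bot =>
    have hempty : ∀ c : ℕ → ℝ × EReal, IsRepSeq φ c → {i | c i = (x, ⊥)} = ∅ :=
      fun c hc ↦ eq_empty_iff_forall_notMem.2 fun i hi ↦ hc.snd_ne_bot i (by rw [hi])
    rw [hempty a ha, hempty a' ha']
  | top =>
    congr 1
    ext i
    constructor <;> intro hi
    · obtain rfl := ha.eq_zero_of_snd_eq_top (by rw [hi])
      exact (ha.apply_zero_eq hφ ha').symm.trans hi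
    · obtain rfl := ha'.eq_zero_of_snd_eq_top (by rw [hi])
      exact (ha.apply_zero_eq hφ ha').trans hi
  | coe y =>
    rw [diagDist_of_ne_top (EReal.coe_ne_top y), Ne, ENNReal.ofReal_eq_zero, not_le] at hp
    have hxy : x < y := by simp only [EReal.toReal_coe] at hp; linarith
    rw [ha.ncard_fiber hxy, ha'.ncard_fiber hxy]

theorem exists_equiv_diagClass_eq [CompactSpace M] [ConnectedSpace M]
    [LocallyConnectedSpace M] (hφ : Continuous φ) (ha : IsRepSeq φ a) (ha' : IsRepSeq φ a') :
    ∃ e : ℕ ≃ ℕ, ∀ i, diagClass (a' (e i)) = diagClass (a i) :=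
  exists_equiv_diagClass_eq_of_ncard_fiber_eq ha.infinite_setOf_diagDist_eq_zero
    ha'.infinite_setOf_diagDist_eq_zero
    (fun _ hp ↦ ⟨ha.finite_fiber hφ hp, ha'.finite_fiber hφ hp⟩)
    fun _ hp ↦ ha.ncard_fiber_eq hφ ha' hp

theorem dMatch_eq_dMatchSeq [CompactSpace M] [ConnectedSpace M] [LocallyConnectedSpace M]
    [CompactSpace N] [ConnectedSpace N] [LocallyConnectedSpace N]
    (hφ : Continuous φ) (hψ : Continuous ψ) (ha : IsRepSeq φ a) (hb : IsRepSeq ψ b) :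
    dMatch φ ψ = dMatchSeq a b := by
  refine le_antisymm (sInf_le ⟨a, b, ha, hb, rfl⟩) (le_sInf ?_)
  rintro _ ⟨a', b', ha', hb', rfl⟩
  obtain ⟨ea, hea⟩ := ha.exists_equiv_diagClass_eq hφ ha'
  obtain ⟨eb, heb⟩ := hb.exists_equiv_diagClass_eq hψ hb'
  exact dMatchSeq_le_of_diagClass_eq ea eb hea heb

theorem exists_eDist_eq_iSup [CompactSpace M] [LocallyConnectedSpace M] [Nonempty M]
    [CompactSpace N] [LocallyConnectedSpace N] [Nonempty N]
    (hφ : Continuous φ) (hψ : Continuous ψ) (ha : IsRepSeq φ a) (hb : IsRepSeq ψ b)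
    {σ : ℕ → ℕ} (hσ : Function.Injective σ) :
    ∃ i₀, eDist (a i₀) (b (σ i₀)) = ⨆ i, eDist (a i) (b (σ i)) :=
  exists_eq_iSup_of_finite_setOf_lt fun _ hc ↦
    ((ha.finite_setOf_lt_diagDist hφ hc.ne').union
      ((hb.finite_setOf_lt_diagDist hψ hc.ne').preimage hσ.injOn)).subset
    fun _ hi ↦ lt_max_iff.1 (hi.trans_le (eDist_le_max_diagDist _ _))

theorem exists_pos_eq_of_eDist_lt [CompactSpace N] [LocallyConnectedSpace N] [Nonempty N]
    (hψ : Continuous ψ) (hb : IsRepSeq ψ b) {p : ℝ × EReal} (hp : p.2 ≠ ⊥)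
    (hpd : diagDist p ≠ 0) : ∃ ε, 0 < ε ∧ ∀ j, eDist p (b j) < ε → b j = p := by
  obtain ⟨θ, hθ₀, hθ⟩ := exists_between (pos_iff_ne_zero.2 hpd)
  obtain ⟨ε, hε₀, hεθ, hgap⟩ :=
    (hb.finite_setOf_eDist_lt hψ hθ).exists_gap (fun j ↦ eDist p (b j)) hθ₀
  refine ⟨ε, hε₀, fun j hj ↦ (eq_of_eDist_eq_zero hp (hb.snd_ne_bot j) hpd ?_).symm⟩
  by_contra hne
  exact (hgap j (hj.trans_le hεθ) (pos_iff_ne_zero.2 hne)).not_gt hj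

theorem ncard_fiber_le_of_dMatchSeq_eq_zero [CompactSpace N] [LocallyConnectedSpace N]
    [Nonempty N] (hψ : Continuous ψ) (ha : IsRepSeq φ a) (hb : IsRepSeq ψ b)
    (h : dMatchSeq a b = 0) {p : ℝ × EReal} (hp : diagDist p ≠ 0) :
    {i | a i = p}.ncard ≤ {j | b j = p}.ncard := by
  rcases eq_empty_or_nonempty {i | a i = p} with hempty | ⟨i₀, rfl⟩
  · simp [hempty]
  obtain ⟨ε, hε, hiso⟩ := hb.exists_pos_eq_of_eDist_lt hψ (ha.snd_ne_bot i₀) hp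
  obtain ⟨σ, hσ, hσε⟩ := exists_forall_eDist_lt_of_dMatchSeq_lt (h ▸ hε)
  exact ncard_le_ncard_of_injOn σ (fun i (hi : a i = a i₀) ↦ hiso _ (hi ▸ hσε i))
    hσ.1.injOn (hb.finite_fiber hψ hp)

theorem exists_forall_eDist_eq_zero [CompactSpace M] [LocallyConnectedSpace M] [Nonempty M]
    [CompactSpace N] [LocallyConnectedSpace N] [Nonempty N]
    (hφ : Continuous φ) (hψ : Continuous ψ) (ha : IsRepSeq φ a) (hb : IsRepSeq ψ b)
    (h : dMatchSeq a b = 0) :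
    ∃ σ : ℕ → ℕ, Function.Bijective σ ∧ ∀ i, eDist (a i) (b (σ i)) = 0 := by
  obtain ⟨e, he⟩ := exists_equiv_diagClass_eq_of_ncard_fiber_eq ha.infinite_setOf_diagDist_eq_zero
    hb.infinite_setOf_diagDist_eq_zero (fun _ hp ↦ ⟨ha.finite_fiber hφ hp, hb.finite_fiber hψ hp⟩)
    fun _ hp ↦ le_antisymm (ha.ncard_fiber_le_of_dMatchSeq_eq_zero hψ hb h hp)
      (hb.ncard_fiber_le_of_dMatchSeq_eq_zero hφ ha (dMatchSeq_comm a b ▸ h) hp)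
  exact ⟨e, e.bijective, fun i ↦ by rw [eDist_congr rfl (he i), eDist_self]⟩

/- Only finitely many indices lie farther than `η` from the diagonal (`Ea`, `Eb`), and only
finitely many pairs `C` involving one of them cost less than some `θ > η`. A bijection of cost
`< κ`, for `κ` below every cost in `C` exceeding `η`, pairs those indices at cost `≤ η`; any other
pair costs `≤ η` because both of its points are within `η` of the diagonal. -/
theorem exists_forall_eDist_le_of_ne_zero_of_ne_top [CompactSpace M] [LocallyConnectedSpace M]
    [Nonempty M] [CompactSpace N] [LocallyConnectedSpace N] [Nonempty N]
    (hφ : Continuous φ) (hψ : Continuous ψ) (ha : IsRepSeq φ a) (hb : IsRepSeq ψ b)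
    (h₀ : dMatchSeq a b ≠ 0) (htop : dMatchSeq a b ≠ ⊤) :
    ∃ σ : ℕ → ℕ, Function.Bijective σ ∧ ∀ i, eDist (a i) (b (σ i)) ≤ dMatchSeq a b := by
  set η := dMatchSeq a b
  set Ea := {i | η < diagDist (a i)}
  set Eb := {j | η < diagDist (b j)}
  have hEa : Ea.Finite := ha.finite_setOf_lt_diagDist hφ h₀
  have hEb : Eb.Finite := hb.finite_setOf_lt_diagDist hψ h₀
  obtain ⟨κa, hηκa, -, hκa⟩ := hEa.exists_gap (fun i ↦ diagDist (a i)) htop.lt_top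
  obtain ⟨κb, hηκb, hκba, hκb⟩ := hEb.exists_gap (fun j ↦ diagDist (b j)) hηκa
  obtain ⟨θ, hηθ, hθκ⟩ := exists_between hηκb
  set C := {ij : ℕ × ℕ | (ij.1 ∈ Ea ∨ ij.2 ∈ Eb) ∧ eDist (a ij.1) (b ij.2) < θ}
  have hC : C.Finite := by
    refine ((hEa.biUnion fun i hi ↦ (finite_singleton i).prod (hb.finite_setOf_eDist_lt hψ
      (hθκ.trans_le (hκba.trans (hκa i hi hi))))).union (hEb.biUnion fun j hj ↦
      (ha.finite_setOf_eDist_lt hφ (hθκ.trans_le (hκb j hj hj))).prod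
      (finite_singleton j))).subset ?_
    rintro ⟨i, j⟩ ⟨hi | hj, hd⟩
    · exact Or.inl (mem_iUnion₂.2 ⟨i, hi, rfl, hd⟩)
    · exact Or.inr (mem_iUnion₂.2 ⟨j, hj, show eDist (b j) (a i) < θ by rwa [eDist_comm], rfl⟩)
  obtain ⟨κ, hηκ, hκθ, hκ⟩ := hC.exists_gap (fun ij ↦ eDist (a ij.1) (b ij.2)) hηθ
  obtain ⟨σ, hσ, hσκ⟩ := exists_forall_eDist_lt_of_dMatchSeq_lt hηκ
  refine ⟨σ, hσ, fun i ↦ ?_⟩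
  by_cases hE : i ∈ Ea ∨ σ i ∈ Eb
  · by_contra! hgt
    exact (hκ (i, σ i) ⟨hE, (hσκ i).trans_le hκθ⟩ hgt).not_gt (hσκ i)
  · rw [not_or] at hE
    exact (eDist_le_max_diagDist _ _).trans (max_le (not_lt.1 hE.1) (not_lt.1 hE.2))

theorem exists_forall_eDist_le_dMatchSeq [CompactSpace M] [LocallyConnectedSpace M] [Nonempty M]
    [CompactSpace N] [LocallyConnectedSpace N] [Nonempty N]
    (hφ : Continuous φ) (hψ : Continuous ψ) (ha : IsRepSeq φ a) (hb : IsRepSeq ψ b) :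
    ∃ σ : ℕ → ℕ, Function.Bijective σ ∧ ∀ i, eDist (a i) (b (σ i)) ≤ dMatchSeq a b := by
  by_cases h₀ : dMatchSeq a b = 0
  · obtain ⟨σ, hσ, h⟩ := exists_forall_eDist_eq_zero hφ hψ ha hb h₀
    exact ⟨σ, hσ, fun i ↦ (h i).trans_le zero_le⟩
  by_cases htop : dMatchSeq a b = ⊤
  · exact ⟨id, Function.bijective_id, fun i ↦ htop ▸ le_top⟩
  exact exists_forall_eDist_le_of_ne_zero_of_ne_top hφ hψ ha hb h₀ htop

end IsRepSeq

theorem optimal_matching_general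
    {M N : Type*} [TopologicalSpace M] [CompactSpace M] [ConnectedSpace M] [LocallyConnectedSpace M] [TopologicalSpace N] [CompactSpace N] [ConnectedSpace N] [LocallyConnectedSpace N]
    {φ : M → ℝ} {ψ : N → ℝ} (hφ : Continuous φ) (hψ : Continuous ψ)
    (a b : ℕ → ℝ × EReal) (ha : IsRepSeq φ a) (hb : IsRepSeq ψ b) :
    (∃ σ : ℕ → ℕ, Function.Bijective σ ∧
      (⨆ i : ℕ, eDist (a i) (b (σ i))) = dMatch φ ψ ∧
      ∃ i₀ : ℕ, eDist (a i₀) (b (σ i₀)) = ⨆ i : ℕ, eDist (a i) (b (σ i))) ∧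
    ∀ σ : ℕ → ℕ, Function.Bijective σ → σ 0 = 0 →
      ∃ i₀ : ℕ, eDist (a i₀) (b (σ i₀)) = ⨆ i : ℕ, eDist (a i) (b (σ i)) := by
  obtain ⟨σ, hσ, hle⟩ := ha.exists_forall_eDist_le_dMatchSeq hφ hψ hb
  refine ⟨⟨σ, hσ, ?_, ha.exists_eDist_eq_iSup hφ hψ hb hσ.1⟩,
    fun σ hσ _ ↦ ha.exists_eDist_eq_iSup hφ hψ hb hσ.1⟩
  rw [ha.dMatch_eq_dMatchSeq hφ hψ hb]
  exact le_antisymm (iSup_le hle) (dMatchSeq_le_iSup hσ)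

theorem optimal_matching
    {M N : Type*} [TopologicalSpace M] [CompactSpace M] [ConnectedSpace M] [LocallyConnectedSpace M] [T2Space M] [TopologicalSpace N] [CompactSpace N] [ConnectedSpace N] [LocallyConnectedSpace N] [T2Space N]
    {φ : M → ℝ} {ψ : N → ℝ} (hφ : Continuous φ) (hψ : Continuous ψ)
    (a b : ℕ → ℝ × EReal) (ha : IsRepSeq φ a) (hb : IsRepSeq ψ b) :
    (∃ σ : ℕ → ℕ, Function.Bijective σ ∧
      (⨆ i : ℕ, eDist (a i) (b (σ i))) = dMatch φ ψ ∧
      ∃ i₀ : ℕ, eDist (a i₀) (b (σ i₀)) = ⨆ i : ℕ, eDist (a i) (b (σ i))) ∧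
    ∀ σ : ℕ → ℕ, Function.Bijective σ → σ 0 = 0 →
      ∃ i₀ : ℕ, eDist (a i₀) (b (σ i₀)) = ⨆ i : ℕ, eDist (a i) (b (σ i)) :=
  optimal_matching_general hφ hψ a b ha hb
end
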